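/- Let A = R/I be a graded Artinian algebra and L a general linear form. If dim_k(0 :_A L)_d > (n−1)·dim_k(0 :_A L)_{d+1} for some d > 0, then A has a nonzero socle element in degree d, i.e., soc(A)_d ≠ 0. -/

import Mathlib

open MvPolynomial Module Submodule

noncomputable section

/-- The degree of a monomial exponent vector. -/
def monDeg {n : ℕ} (μ : Fin n →₀ ℕ) : ℕ := ∑ i, μ i

variable (k : Type*) [Field k] {n : ℕ}

/-- A property `P` of tuples holds *generically* if it holds on a nonempty
Zariski-open subset of parameter space. -/
def Generic {ι : Type*} (P : (ι → k) → Prop) : Prop :=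
  ∃ p : MvPolynomial ι k, p ≠ 0 ∧ ∀ c : ι → k, MvPolynomial.eval c p ≠ 0 → P c

/-- The linear form with coefficient vector `c`. -/
def linForm (c : Fin n → k) : MvPolynomial (Fin n) k := ∑ i, MvPolynomial.C (c i) * X i

/-- `dim_k I_d`, the dimension of the degree-`d` piece of a homogeneous ideal. -/
def idim (I : Ideal (MvPolynomial (Fin n) k)) (d : ℕ) : ℕ :=
  finrank k ↥(Submodule.restrictScalars k I ⊓ homogeneousSubmodule (Fin n) k d)

/-- The Hilbert function of `A = R/I`. -/
def hilb (I : Ideal (MvPolynomial (Fin n) k)) (d : ℕ) : ℕ :=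
  finrank k ↥(homogeneousSubmodule (Fin n) k d) - idim k I d

/-- The reduction number `r₁(R/I)`: the least `ℓ` such that for a general linear
form `L`, `(R/(I+(L)))_{ℓ+1} = 0`. -/
def redNum (I : Ideal (MvPolynomial (Fin n) k)) : ℕ :=
  sInf {ℓ : ℕ | Generic k fun c : Fin n → k =>
    hilb k (I ⊔ Ideal.span {linForm k c}) (ℓ + 1) = 0}

/-- The degree-`d` part of the preimage in `R` of the socle of `A = R/I`:
homogeneous elements of degree `d` killed by every variable modulo `I`. -/
def socPiece (I : Ideal (MvPolynomial (Fin n) k)) (d : ℕ) :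
    Submodule k (MvPolynomial (Fin n) k) :=
  homogeneousSubmodule (Fin n) k d ⊓
    ⨅ i : Fin n, Submodule.comap (LinearMap.mulLeft k (X i)) (Submodule.restrictScalars k I)

/-- `dim_k soc(R/I)_d`. -/
def socDim (I : Ideal (MvPolynomial (Fin n) k)) (d : ℕ) : ℕ :=
  finrank k ↥(socPiece k I d) - idim k I d

/-- `R/I` is level with socle degree `s` : the socle is concentrated in degree `s`. -/
def IsLevel (I : Ideal (MvPolynomial (Fin n) k)) (s : ℕ) : Prop :=
  ∀ d : ℕ, d ≠ s → ∀ f ∈ socPiece k I d, f ∈ I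

/-- `dim_k (0 :_{R/I} L)_d` where `L` is the linear form with coefficients `c`. -/
def annDim (I : Ideal (MvPolynomial (Fin n) k)) (c : Fin n → k) (d : ℕ) : ℕ :=
  finrank k ↥(homogeneousSubmodule (Fin n) k d ⊓
      Submodule.comap (LinearMap.mulLeft k (linForm k c)) (Submodule.restrictScalars k I))
    - idim k I d

/-- `dim_k ((J : x)/J)_d` for `x` a variable (or any polynomial). -/
def colonDim (J : Ideal (MvPolynomial (Fin n) k)) (x : MvPolynomial (Fin n) k) (d : ℕ) : ℕ :=
  finrank k ↥(homogeneousSubmodule (Fin n) k d ⊓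
      Submodule.comap (LinearMap.mulLeft k x) (Submodule.restrictScalars k J))
    - idim k J d

/-- `R/I` has the Weak Lefschetz Property: there is a linear form `L` such that
each multiplication map `(R/I)_i → (R/I)_{i+1}` is injective or surjective. -/
def HasWLP (I : Ideal (MvPolynomial (Fin n) k)) : Prop :=
  ∃ c : Fin n → k, ∀ i : ℕ,
    (∀ f ∈ homogeneousSubmodule (Fin n) k i, linForm k c * f ∈ I → f ∈ I) ∨
    hilb k (I ⊔ Ideal.span {linForm k c}) (i + 1) = 0

/-! ### Binomial expansions -/

/-- The largest `m` with `C(m,i) ≤ h` (junk value if unbounded). -/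
def msup (h i : ℕ) : ℕ := sSup {m : ℕ | Nat.choose m i ≤ h}

/-- Auxiliary greedy binomial-expansion sum. -/
def expandAux (g : ℕ → ℕ → ℕ) : ℕ → ℕ → ℕ
  | 0, _ => 0
  | i + 1, h =>
    if h = 0 then 0
    else g (msup h (i + 1)) (i + 1) +
      expandAux g i (h - Nat.choose (msup h (i + 1)) (i + 1))

/-- `(h_{(i)})⁻ = C(m_i−1,i)+⋯+C(m_j−1,j)` from the `i`-binomial expansion of `h`. -/
def lowerDec (h i : ℕ) : ℕ := expandAux (fun m t => Nat.choose (m - 1) t) i h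

/-- Macaulay growth `h^{⟨i⟩} = C(m_i+1,i+1)+⋯+C(m_j+1,j+1)`. -/
def macGrow (h i : ℕ) : ℕ := expandAux (fun m t => Nat.choose (m + 1) (t + 1)) i h

/-- A sequence is an O-sequence if it starts at 1 and satisfies Macaulay's bound. -/
def IsOSeq (h : ℕ → ℕ) : Prop :=
  h 0 = 1 ∧ ∀ d : ℕ, 1 ≤ d → h (d + 1) ≤ macGrow (h d) d

/-! ### Graded Betti numbers via the Koszul complex -/

/-- The degree-`z` piece of a homogeneous ideal, indexed by `ℤ` (zero in negative degrees). -/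
def pieceZ (I : Ideal (MvPolynomial (Fin n) k)) (z : ℤ) :
    Submodule k (MvPolynomial (Fin n) k) :=
  if 0 ≤ z then Submodule.restrictScalars k I ⊓ homogeneousSubmodule (Fin n) k z.toNat else ⊥

theorem mulX_mem_pieceZ (I : Ideal (MvPolynomial (Fin n) k)) (i : Fin n) {z : ℤ}
    {x : MvPolynomial (Fin n) k} (hx : x ∈ pieceZ k I z) : X i * x ∈ pieceZ k I (z + 1) := by
  by_cases hz : 0 ≤ z
  · have hz1 : 0 ≤ z + 1 := by omega
    simp only [pieceZ, if_pos hz, Submodule.mem_inf, Submodule.restrictScalars_mem,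
      mem_homogeneousSubmodule] at hx
    simp only [pieceZ, if_pos hz1, Submodule.mem_inf, Submodule.restrictScalars_mem,
      mem_homogeneousSubmodule]
    refine ⟨I.mul_mem_left _ hx.1, ?_⟩
    have := (MvPolynomial.isHomogeneous_X k i).mul hx.2
    have hnat : (z + 1).toNat = 1 + z.toNat := by omega
    rwa [hnat]
  · simp only [pieceZ, if_neg hz, Submodule.mem_bot] at hx
    subst hx
    rw [mul_zero]
    exact Submodule.zero_mem _

/-- Multiplication by the variable `X i`, raising the degree by one. -/
def mulXmap (I : Ideal (MvPolynomial (Fin n) k)) (i : Fin n) {z w : ℤ} (hw : w = z + 1) :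
    ↥(pieceZ k I z) →ₗ[k] ↥(pieceZ k I w) :=
  hw ▸ (LinearMap.mulLeft k (X i)).restrict (fun x hx => mulX_mem_pieceZ k I i hx)

/-- Index type for the Koszul complex: `q`-element subsets of the variables. -/
abbrev kIdx (n q : ℕ) : Type := {S : Finset (Fin n) // S.card = q}

/-- The degree-`j` strand of the `q`-th term of the Koszul complex of `I`. -/
abbrev kSpace (I : Ideal (MvPolynomial (Fin n) k)) (q : ℕ) (j : ℤ) : Type _ :=
  ∀ _ : kIdx n q, ↥(pieceZ k I (j - q))

/-- The Koszul differential `K_{q+1} → K_q` (degree-`j` strand). -/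
def koszulD (I : Ideal (MvPolynomial (Fin n) k)) (q : ℕ) (j : ℤ) :
    kSpace k I (q + 1) j →ₗ[k] kSpace k I q j :=
  LinearMap.pi fun T =>
    ∑ i ∈ (Finset.univ \ T.1).attach,
      ((-1 : k) ^ (T.1.filter (fun l => l < i.1)).card) •
        ((mulXmap k I i.1 (show (j - (q : ℤ)) = (j - ((q : ℕ) + 1 : ℕ)) + 1 by push_cast; ring)).comp
          (LinearMap.proj (⟨insert i.1 T.1, by
            have hi : i.1 ∉ T.1 := by
              have := i.2
              simp only [Finset.mem_sdiff, Finset.mem_univ, true_and] at this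
              exact this
            rw [Finset.card_insert_of_notMem hi, T.2]⟩ : kIdx n (q + 1))))

/-- The graded Betti number `β_{q,j}(I) = dim_k Tor_q^R(I,k)_j`, computed as the
dimension of the homology of the degree-`j` strand of the Koszul complex of `I`. -/
def betti (I : Ideal (MvPolynomial (Fin n) k)) (q j : ℕ) : ℕ :=
  match q with
  | 0 => finrank k (kSpace k I 0 (j : ℤ)) - finrank k ↥(LinearMap.range (koszulD k I 0 (j : ℤ)))
  | p + 1 =>
    finrank k ↥(LinearMap.ker (koszulD k I p (j : ℤ))) -
      finrank k ↥(LinearMap.range (koszulD k I (p + 1) (j : ℤ)))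

/-- `J` is `m`-regular: `β_{p,j}(J) = 0` whenever `j > m + p`. -/
def IsMReg (m : ℕ) (J : Ideal (MvPolynomial (Fin n) k)) : Prop :=
  ∀ p j : ℕ, m + p < j → betti k J p j = 0

/-! ### Monomial ideals, initial ideals, Gin and lex-segment ideals -/

/-- The degree reverse lexicographic order (as a strict relation) on exponent
vectors, for `x_1 > x_2 > ⋯ > x_n`. -/
def rlLT {n : ℕ} (μ ν : Fin n →₀ ℕ) : Prop :=
  monDeg μ < monDeg ν ∨
    (monDeg μ = monDeg ν ∧ ∃ i : Fin n, ν i < μ i ∧ ∀ l : Fin n, i < l → μ l = ν l)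

/-- The lexicographic order (as a strict relation) on exponent vectors,
for `x_1 > x_2 > ⋯ > x_n`. -/
def lexLT {n : ℕ} (μ ν : Fin n →₀ ℕ) : Prop :=
  ∃ i : Fin n, μ i < ν i ∧ ∀ l : Fin n, l < i → μ l = ν l

/-- `μ` is the leading (degrevlex-largest) monomial of `f`. -/
def IsLeadMon (f : MvPolynomial (Fin n) k) (μ : Fin n →₀ ℕ) : Prop :=
  f ≠ 0 ∧ μ ∈ f.support ∧ ∀ ν ∈ f.support, ν ≠ μ → rlLT ν μ

/-- The initial ideal of `I` with respect to the degree reverse lexicographic order. -/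
def initialIdeal (I : Ideal (MvPolynomial (Fin n) k)) : Ideal (MvPolynomial (Fin n) k) :=
  Ideal.span {x | ∃ f ∈ I, ∃ μ, IsLeadMon k f μ ∧ x = MvPolynomial.monomial μ (1 : k)}

/-- The linear change of coordinates determined by the matrix `g`. -/
def changeCoord (g : Fin n → Fin n → k) :
    MvPolynomial (Fin n) k →ₐ[k] MvPolynomial (Fin n) k :=
  MvPolynomial.aeval fun i => ∑ j, MvPolynomial.C (g i j) * X j

/-- `J` is the generic initial ideal (revlex) of `I`: for a generic change of
coordinates `g`, the initial ideal of `g·I` equals `J`. -/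
def IsGin (I J : Ideal (MvPolynomial (Fin n) k)) : Prop :=
  ∃ p : MvPolynomial (Fin n × Fin n) k, p ≠ 0 ∧
    ∀ g : Fin n → Fin n → k, MvPolynomial.eval (fun ij => g ij.1 ij.2) p ≠ 0 →
      initialIdeal k (Ideal.map (changeCoord k g) I) = J

/-- The lex-segment ideal associated to `I`: in each degree it is spanned by the
`dim_k I_d` lexicographically largest monomials. -/
def lexIdeal (I : Ideal (MvPolynomial (Fin n) k)) : Ideal (MvPolynomial (Fin n) k) :=
  Ideal.span {x | ∃ μ : Fin n →₀ ℕ,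
    Nat.card {ν : Fin n →₀ ℕ // monDeg ν = monDeg μ ∧ (ν = μ ∨ lexLT μ ν)} ≤ idim k I (monDeg μ)
    ∧ x = MvPolynomial.monomial μ (1 : k)}

/-- A monomial ideal: with every polynomial it contains all of its monomials. -/
def IsMonomialIdeal (J : Ideal (MvPolynomial (Fin n) k)) : Prop :=
  ∀ f ∈ J, ∀ μ ∈ f.support, MvPolynomial.monomial μ (1 : k) ∈ J

/-- A stable monomial ideal: for every monomial `w ∈ J` and `j < m(w)`,
`x_j·w/x_{m(w)} ∈ J`, where `m(w)` is the largest variable dividing `w`. -/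
def IsStable (J : Ideal (MvPolynomial (Fin n) k)) : Prop :=
  IsMonomialIdeal k J ∧
    ∀ (μ : Fin n →₀ ℕ) (i j : Fin n), MvPolynomial.monomial μ (1 : k) ∈ J → μ i ≠ 0 →
      (∀ l : Fin n, i < l → μ l = 0) → j < i →
      MvPolynomial.monomial (μ + Finsupp.single j 1 - Finsupp.single i 1) (1 : k) ∈ J

/-- A lex-segment ideal: a monomial ideal whose monomials in each degree form an
upward-closed set in the lexicographic order. -/
def IsLexSegmentIdeal (J : Ideal (MvPolynomial (Fin n) k)) : Prop :=
  IsMonomialIdeal k J ∧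
    ∀ μ ν : Fin n →₀ ℕ, monDeg μ = monDeg ν → MvPolynomial.monomial μ (1 : k) ∈ J →
      lexLT μ ν → MvPolynomial.monomial ν (1 : k) ∈ J

/-- `μ` is a minimal monomial generator of the monomial ideal `J`. -/
def IsMinGen (J : Ideal (MvPolynomial (Fin n) k)) (μ : Fin n →₀ ℕ) : Prop :=
  MvPolynomial.monomial μ (1 : k) ∈ J ∧
    ∀ i : Fin n, μ i ≠ 0 → MvPolynomial.monomial (μ - Finsupp.single i 1) (1 : k) ∉ J

/-- The ideal `(I_{≤ t})` generated by the homogeneous elements of `I` of degree `≤ t`. -/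
def trunc (I : Ideal (MvPolynomial (Fin n) k)) (t : ℕ) : Ideal (MvPolynomial (Fin n) k) :=
  Ideal.span {f | f ∈ I ∧ ∃ e ≤ t, f.IsHomogeneous e}

end

noncomputable section

variable (k : Type*) [Field k] {n : ℕ}

/-- `I` is a homogeneous ideal: it contains all homogeneous components of its elements. -/
def IsHomogIdeal (I : Ideal (MvPolynomial (Fin n) k)) : Prop :=
  ∀ f ∈ I, ∀ e : ℕ, MvPolynomial.homogeneousComponent e f ∈ I

end

/-!
If `soc(A)_d = 0`, pick a general `L = ∑ cᵢ xᵢ` with every `cᵢ ≠ 0` and fix a variable `x_j`.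
For `f ∈ (0 :_A L)_d` the products `xᵢ f` (`i ≠ j`) lie in `(0 :_A L)_{d+1}`, and if they all
vanish then so does `x_j f = c_j⁻¹ (L f - ∑_{i ≠ j} cᵢ xᵢ f)`, making `f` a socle element of
degree `d`, hence zero. So `f ↦ (xᵢ f)_{i ≠ j}` embeds `(0 :_A L)_d` into `n - 1` copies of
`(0 :_A L)_{d+1}`.
-/

open MvPolynomial Module Submodule

instance MvPolynomial.finite_homogeneousSubmodule {σ R : Type*} [CommSemiring R] [Finite σ]
    (d : ℕ) : Module.Finite R (homogeneousSubmodule σ R d) :=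
  Module.Finite.iff_fg.2 (homogeneousSubmodule_fg σ R d)

theorem MvPolynomial.exists_eval_ne_zero {k σ : Type*} [Field k] [Infinite k]
    {p : MvPolynomial σ k} (hp : p ≠ 0) : ∃ c : σ → k, eval c p ≠ 0 := by
  by_contra! h
  exact hp (MvPolynomial.funext fun c => by rw [h c, map_zero])

theorem Module.finrank_le_finrank_iInf_ker_add {k V Q ι : Type*} [Field k] [Fintype ι]
    [AddCommGroup V] [Module k V] [FiniteDimensional k V]
    [AddCommGroup Q] [Module k Q] [FiniteDimensional k Q] (φ : ι → V →ₗ[k] Q) :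
    finrank k V ≤ finrank k ↥(⨅ i, LinearMap.ker (φ i)) + Fintype.card ι * finrank k Q := by
  have hrange : finrank k (LinearMap.range (LinearMap.pi φ)) ≤ Fintype.card ι * finrank k Q := by
    simpa only [Module.finrank_pi_fintype, Finset.sum_const, Finset.card_univ, smul_eq_mul] using
      Submodule.finrank_le (LinearMap.range (LinearMap.pi φ))
  have := (LinearMap.pi φ).finrank_range_add_finrank_ker
  rw [LinearMap.ker_pi] at this
  omega

section ColonIdeal

variable {k : Type*} [Field k] {n : ℕ}

/-- The degree-`d` piece of `(I :_R x)`; its quotient by `I_d` is `(0 :_A x)_d`. -/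
noncomputable def colonPiece (I : Ideal (MvPolynomial (Fin n) k)) (x : MvPolynomial (Fin n) k)
    (d : ℕ) : Submodule k (MvPolynomial (Fin n) k) :=
  homogeneousSubmodule (Fin n) k d ⊓ comap (LinearMap.mulLeft k x) (restrictScalars k I)

noncomputable def idealPiece (I : Ideal (MvPolynomial (Fin n) k)) (d : ℕ) :
    Submodule k (MvPolynomial (Fin n) k) :=
  restrictScalars k I ⊓ homogeneousSubmodule (Fin n) k d

variable {I : Ideal (MvPolynomial (Fin n) k)} {x f : MvPolynomial (Fin n) k} {d : ℕ}

theorem colonDim_eq :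
    colonDim k I x d = finrank k (colonPiece I x d) - finrank k (idealPiece I d) := rfl

instance : FiniteDimensional k (colonPiece I x d) :=
  Submodule.finiteDimensional_of_le inf_le_left

instance : FiniteDimensional k (idealPiece I d) :=
  Submodule.finiteDimensional_of_le inf_le_right

theorem idealPiece_le_colonPiece : idealPiece I d ≤ colonPiece I x d :=
  fun _ hf => ⟨hf.2, I.mul_mem_left x hf.1⟩

theorem X_mul_mem_colonPiece (i : Fin n) (hf : f ∈ colonPiece I x d) :
    X i * f ∈ colonPiece I x (d + 1) := by
  refine ⟨add_comm 1 d ▸ (isHomogeneous_X k i).mul hf.1, ?_⟩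
  change x * (X i * f) ∈ I
  rw [mul_left_comm]
  exact I.mul_mem_left _ hf.2

theorem finrank_quotient_idealPiece :
    finrank k (colonPiece I x d ⧸ (idealPiece I d).comap (colonPiece I x d).subtype) =
      colonDim k I x d := by
  have hcomap := (comapSubtypeEquivOfLe (idealPiece_le_colonPiece (I := I) (x := x) (d := d)))
    |>.finrank_eq
  have := finrank_quotient_add_finrank ((idealPiece I d).comap (colonPiece I x d).subtype)
  rw [colonDim_eq]
  omega

theorem colonDim_le_card_mul (S : Finset (Fin n))
    (hS : ∀ f, x * f ∈ I → (∀ i ∈ S, X i * f ∈ I) → ∀ i, X i * f ∈ I)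
    (hsoc : ∀ f ∈ socPiece k I d, f ∈ I) :
    colonDim k I x d ≤ S.card * colonDim k I x (d + 1) := by
  set P := (idealPiece I (d + 1)).comap (colonPiece I x (d + 1)).subtype
  let φ : S → colonPiece I x d →ₗ[k] colonPiece I x (d + 1) ⧸ P := fun i =>
    P.mkQ ∘ₗ (LinearMap.mulLeft k (X i.1)).restrict fun _ hf => X_mul_mem_colonPiece i.1 hf
  have hker : (⨅ i, LinearMap.ker (φ i)).map (colonPiece I x d).subtype ≤ idealPiece I d := by
    rintro _ ⟨f, hf, rfl⟩
    have hXf : ∀ i ∈ S, X i * (f : MvPolynomial (Fin n) k) ∈ I := fun i hi =>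
      ((Quotient.mk_eq_zero P).1 ((mem_iInf _).1 hf ⟨i, hi⟩)).1
    have hfsoc : (f : MvPolynomial (Fin n) k) ∈ socPiece k I d :=
      ⟨f.2.1, mem_iInf _ |>.2 (hS f f.2.2 hXf)⟩
    exact ⟨hsoc f hfsoc, f.2.1⟩
  have := finrank_le_finrank_iInf_ker_add φ
  rw [Fintype.card_coe, finrank_quotient_idealPiece, ← finrank_map_subtype_eq] at this
  have := finrank_mono hker
  rw [colonDim_eq]
  omega

theorem X_mul_mem_of_linForm_mul_mem {I : Ideal (MvPolynomial (Fin n) k)} {c : Fin n → k}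
    {j : Fin n} (hcj : c j ≠ 0) {f : MvPolynomial (Fin n) k} (hL : linForm k c * f ∈ I)
    (hX : ∀ i ∈ Finset.univ.erase j, X i * f ∈ I) (i : Fin n) : X i * f ∈ I := by
  rcases eq_or_ne i j with rfl | hij
  · have hsum : linForm k c * f - ∑ l ∈ Finset.univ.erase i, C (c l) * (X l * f) =
        C (c i) * (X i * f) := by
      rw [linForm, Finset.sum_mul, ← Finset.add_sum_erase _ _ (Finset.mem_univ i)]
      simp only [mul_assoc, add_sub_cancel_right]
    have := I.sub_mem hL (I.sum_mem fun l hl => I.mul_mem_left (C (c l)) (hX l hl))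
    rwa [hsum, Ideal.unit_mul_mem_iff_mem I ((Ne.isUnit hcj).map C)] at this
  · exact hX i (Finset.mem_erase.2 ⟨hij, Finset.mem_univ i⟩)

theorem exists_card_eq_sub_one_of_linForm_mul_mem {I : Ideal (MvPolynomial (Fin n) k)}
    {c : Fin n → k} (hc : ∀ i, c i ≠ 0) :
    ∃ S : Finset (Fin n), S.card = n - 1 ∧
      ∀ f, linForm k c * f ∈ I → (∀ i ∈ S, X i * f ∈ I) → ∀ i, X i * f ∈ I := by
  rcases n.eq_zero_or_pos with rfl | hn
  · exact ⟨∅, rfl, fun _ _ _ i => i.elim0⟩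
  · exact ⟨Finset.univ.erase ⟨0, hn⟩, by simp,
      fun _ hL hX => X_mul_mem_of_linForm_mul_mem (hc _) hL hX⟩

end ColonIdeal

theorem stmt_0_general {k : Type*} [Field k] [CharZero k] {n : ℕ}
    (I : Ideal (MvPolynomial (Fin n) k))
    (d : ℕ)
    (hgen : Generic k fun c : Fin n → k =>
      (n - 1) * annDim k I c (d + 1) < annDim k I c d) :
    ∃ f ∈ socPiece k I d, f ∉ I := by
  by_contra! hsoc
  obtain ⟨p, hp0, hp⟩ := hgen
  have hprod : ∏ i, (X i : MvPolynomial (Fin n) k) ≠ 0 :=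
    Finset.prod_ne_zero_iff.2 fun i _ => X_ne_zero i
  obtain ⟨c, hc⟩ := exists_eval_ne_zero (mul_ne_zero hp0 hprod)
  simp only [map_mul, map_prod, eval_X, mul_ne_zero_iff, Finset.prod_ne_zero_iff,
    Finset.mem_univ, forall_const] at hc
  obtain ⟨S, hScard, hS⟩ := exists_card_eq_sub_one_of_linForm_mul_mem (I := I) hc.2
  have := colonDim_le_card_mul S hS hsoc
  rw [hScard] at this
  exact (hp c hc.1).not_ge this

/-- If for a general linear form `L` one has
`dim_k (0 :_A L)_d > (n-1)·dim_k (0 :_A L)_{d+1}` for some `d > 0`, then the graded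
Artinian algebra `A = R/I` has a nonzero socle element in degree `d`. -/
theorem stmt_0 {k : Type*} [Field k] [CharZero k] {n : ℕ}
    (I : Ideal (MvPolynomial (Fin n) k)) (hI : IsHomogIdeal k I)
    (hart : ∃ N : ℕ, ∀ t : ℕ, N ≤ t → hilb k I t = 0)
    (d : ℕ) (hd : 0 < d)
    (hgen : Generic k fun c : Fin n → k =>
      (n - 1) * annDim k I c (d + 1) < annDim k I c d) :
    ∃ f ∈ socPiece k I d, f ∉ I :=
  stmt_0_general I d hgen
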